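/- Let F ∈ ℂ^{N × n'} and G ∈ ℂ^{N × r}, and let M = Fᴴ G ∈ ℂ^{n × r} with n ≥ r. Let M = U S Vᴴ be a singular value decomposition with U ∈ ℂ^{n × r} having orthonormal columns, S diagonal with nonnegative entries, and V ∈ ℂ^{r × r} unitary. Then B = V Uᴴ minimizes ‖F − G B‖_F over all B ∈ ℂ^{r × n'} with B Bᴴ = I_r. -/

import Mathlib

open Matrix

noncomputable def frobNorm {p q : ℕ} (M : Matrix (Fin p) (Fin q) ℂ) : ℝ :=
  Real.sqrt (∑ i, ∑ j, ‖M i j‖ ^ 2)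

lemma cs_aux {n : ℕ} (x y : Fin n → ℂ)
    (hx : ∑ j, (starRingEnd ℂ) (x j) * x j = 1)
    (hy : ∑ j, (starRingEnd ℂ) (y j) * y j = 1) :
    ‖∑ j, (starRingEnd ℂ) (x j) * y j‖ ≤ 1 := by
  let X : EuclideanSpace ℂ (Fin n) := WithLp.toLp 2 x
  let Y : EuclideanSpace ℂ (Fin n) := WithLp.toLp 2 y
  have hXY : (inner ℂ X Y : ℂ) = ∑ j, (starRingEnd ℂ) (x j) * y j := by
    simp [PiLp.inner_apply, X, Y, mul_comm]
  have nX : ‖X‖ = 1 := by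
    have h1 : (inner ℂ X X : ℂ) = 1 := by
      rw [← hx]
      exact (fun a b : Fin n → ℂ => (by simp [PiLp.inner_apply, mul_comm] : inner ℂ (WithLp.toLp 2 a : EuclideanSpace ℂ (Fin n)) (WithLp.toLp 2 b) = ∑ j, (starRingEnd ℂ) (a j) * b j)) x x
    rw [@norm_eq_sqrt_re_inner ℂ, h1]; simp
  have nY : ‖Y‖ = 1 := by
    have h1 : (inner ℂ Y Y : ℂ) = 1 := by
      rw [← hy]
      exact (fun a b : Fin n → ℂ => (by simp [PiLp.inner_apply, mul_comm] : inner ℂ (WithLp.toLp 2 a : EuclideanSpace ℂ (Fin n)) (WithLp.toLp 2 b) = ∑ j, (starRingEnd ℂ) (a j) * b j)) y y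
    rw [@norm_eq_sqrt_re_inner ℂ, h1]; simp
  have := norm_inner_le_norm (𝕜 := ℂ) X Y
  rw [hXY, nX, nY] at this
  simpa using this

lemma frob_sum {p q : ℕ} (M : Matrix (Fin p) (Fin q) ℂ) :
    ∑ i, ∑ j, ‖M i j‖ ^ 2 = (trace (Mᴴ * M)).re := by
  rw [Finset.sum_comm]
  simp [trace, Matrix.mul_apply, Matrix.diag, conjTranspose_apply, Complex.sq_norm,
    Complex.re_sum, ← Complex.normSq_eq_conj_mul_self, Complex.normSq]

lemma expand_aux {N n' r : ℕ} (F : Matrix (Fin N) (Fin n') ℂ) (G : Matrix (Fin N) (Fin r) ℂ)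
    (B : Matrix (Fin r) (Fin n') ℂ) (hB : B * Bᴴ = 1) :
    (trace ((F - G*B)ᴴ * (F - G*B))).re
      = (trace (Fᴴ*F)).re + (trace (Gᴴ*G)).re - 2 * (trace (Bᴴ * (Gᴴ * F))).re := by
  have e1 : (F - G*B)ᴴ * (F - G*B)
      = Fᴴ*F - Fᴴ*(G*B) - (Bᴴ*Gᴴ)*F + Bᴴ*(Gᴴ*G)*B := by
    simp only [conjTranspose_sub, conjTranspose_mul]
    simp only [Matrix.sub_mul, Matrix.mul_sub, Matrix.mul_assoc]
    abel
  have e2 : trace (Bᴴ*(Gᴴ*G)*B) = trace (Gᴴ*G) := by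
    rw [trace_mul_cycle]
    rw [← Matrix.mul_assoc, hB, Matrix.one_mul]
  have e3 : trace (Fᴴ*(G*B)) = star (trace ((Bᴴ*Gᴴ)*F)) := by
    rw [← trace_conjTranspose]
    congr 1
    simp [conjTranspose_mul, Matrix.mul_assoc]
  rw [e1]
  simp only [trace_add, trace_sub, e2, e3]
  have : ∀ z : ℂ, (star z).re = z.re := fun z => rfl
  simp [Complex.add_re, Complex.sub_re, this, Matrix.mul_assoc]
  ring

theorem stmt_8 (N n' r : ℕ) (hr : r ≤ n')
    (F : Matrix (Fin N) (Fin n') ℂ) (G : Matrix (Fin N) (Fin r) ℂ)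
    (U : Matrix (Fin n') (Fin r) ℂ) (σ : Fin r → ℝ) (V : Matrix (Fin r) (Fin r) ℂ)
    (hU : Uᴴ * U = 1) (hσ : ∀ i, 0 ≤ σ i)
    (hV : V ∈ Matrix.unitaryGroup (Fin r) ℂ)
    (hSVD : Fᴴ * G = U * Matrix.diagonal (fun i => (σ i : ℂ)) * Vᴴ) :
    ∀ B : Matrix (Fin r) (Fin n') ℂ, B * Bᴴ = 1 →
      frobNorm (F - G * (V * Uᴴ)) ≤ frobNorm (F - G * B) := by
  intro B hB
  set S : Matrix (Fin r) (Fin r) ℂ := Matrix.diagonal (fun i => (σ i : ℂ)) with hS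
  have hV1 : Vᴴ * V = 1 := by
    have := hV.1
    rwa [Matrix.star_eq_conjTranspose] at this
  have hV2 : V * Vᴴ = 1 := by
    have := hV.2
    rwa [Matrix.star_eq_conjTranspose] at this
  -- feasibility of B₀
  have hB0 : (V * Uᴴ) * (V * Uᴴ)ᴴ = 1 := by
    rw [conjTranspose_mul, conjTranspose_conjTranspose]
    calc V * Uᴴ * (U * Vᴴ) = V * (Uᴴ * U) * Vᴴ := by
          rw [Matrix.mul_assoc, Matrix.mul_assoc, Matrix.mul_assoc]
      _ = 1 := by rw [hU, Matrix.mul_one, hV2]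
  -- G^H F = V S U^H
  have hGF : Gᴴ * F = V * S * Uᴴ := by
    have h1 : Gᴴ * F = (Fᴴ * G)ᴴ := by simp [conjTranspose_mul]
    rw [h1, hSVD]
    have hSH : Sᴴ = S := by
      simp [hS, Matrix.diagonal_conjTranspose]
    simp [conjTranspose_mul, hSH, Matrix.mul_assoc]
  -- trace rewriting : trace (Bᴴ (Gᴴ F)) = trace (S * W B)
  have htr : ∀ C : Matrix (Fin r) (Fin n') ℂ,
      trace (Cᴴ * (Gᴴ * F)) = trace (S * (Uᴴ * (Cᴴ * V))) := by
    intro C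
    rw [hGF]
    calc trace (Cᴴ * (V * S * Uᴴ))
        = trace ((Cᴴ * (V * S)) * Uᴴ) := by simp only [Matrix.mul_assoc]
      _ = trace (Uᴴ * (Cᴴ * (V * S))) := by rw [trace_mul_comm]
      _ = trace ((Uᴴ * (Cᴴ * V)) * S) := by simp only [Matrix.mul_assoc]
      _ = trace (S * (Uᴴ * (Cᴴ * V))) := by rw [trace_mul_comm]
  -- re trace (S * W) = ∑ σ i * re (W i i)
  have hdiag : ∀ W : Matrix (Fin r) (Fin r) ℂ,
      (trace (S * W)).re = ∑ i, σ i * (W i i).re := by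
    intro W
    simp [hS, trace, Matrix.diag, Matrix.diagonal_mul, Complex.re_sum]
  -- the bound on diagonal entries of W for feasible B
  have hWbound : ∀ i, ‖(Uᴴ * (Bᴴ * V)) i i‖ ≤ 1 := by
    intro i
    have hx : ∑ j, (starRingEnd ℂ) (U j i) * U j i = 1 := by
      have := congrFun (congrFun hU i) i
      simpa [Matrix.mul_apply, conjTranspose_apply, Matrix.one_apply_eq] using this
    have hBV : (Bᴴ * V)ᴴ * (Bᴴ * V) = 1 := by
      rw [conjTranspose_mul, conjTranspose_conjTranspose]
      calc Vᴴ * B * (Bᴴ * V) = Vᴴ * (B * Bᴴ) * V := by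
            rw [Matrix.mul_assoc, Matrix.mul_assoc, Matrix.mul_assoc]
        _ = 1 := by rw [hB, Matrix.mul_one, hV1]
    have hy : ∑ j, (starRingEnd ℂ) ((Bᴴ * V) j i) * (Bᴴ * V) j i = 1 := by
      have := congrFun (congrFun hBV i) i
      simpa [Matrix.mul_apply, conjTranspose_apply, Matrix.one_apply_eq, mul_comm] using this
    have hwi : (Uᴴ * (Bᴴ * V)) i i = ∑ j, (starRingEnd ℂ) (U j i) * (Bᴴ * V) j i := by
      simp [Matrix.mul_apply, conjTranspose_apply]
    rw [hwi]
    exact cs_aux _ _ hx hy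
  -- W for B₀ is 1
  have hW0 : Uᴴ * ((V * Uᴴ)ᴴ * V) = 1 := by
    rw [conjTranspose_mul, conjTranspose_conjTranspose]
    calc Uᴴ * (U * Vᴴ * V) = Uᴴ * U * (Vᴴ * V) := by
          rw [Matrix.mul_assoc, Matrix.mul_assoc]
      _ = 1 := by rw [hU, hV1, Matrix.mul_one]
  -- trace inequality
  have key : (trace (Bᴴ * (Gᴴ * F))).re ≤ ∑ i, σ i := by
    rw [htr B, hdiag]
    apply Finset.sum_le_sum
    intro i _
    calc σ i * ((Uᴴ * (Bᴴ * V)) i i).re ≤ σ i * 1 := by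
          apply mul_le_mul_of_nonneg_left _ (hσ i)
          exact le_trans (Complex.re_le_norm _) (hWbound i)
      _ = σ i := mul_one _
  have key0 : (trace ((V * Uᴴ)ᴴ * (Gᴴ * F))).re = ∑ i, σ i := by
    rw [htr (V * Uᴴ), hW0, hdiag]
    simp
  -- finish
  unfold frobNorm
  apply Real.sqrt_le_sqrt
  rw [frob_sum, frob_sum, expand_aux F G _ hB0, expand_aux F G B hB, key0]
  have : (trace (Bᴴ * (Gᴴ * F))).re ≤ ∑ i, σ i := key
  linarith
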